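/- arXiv:2510.23309 — 2 statements merged into one kernel-verified Lean document; each statement's English description precedes it below -/
import Mathlib

section
/- Let 0 < α < 2 and β > 0. There exists a constant C_{α,β} > 0 such that for all ω ≥ 0 and t ≥ 0, E_{α,β}(ω t^α) ≤ C_{α,β} (1 + ω^{(1-β)/α})(1 + t^{1-β}) exp(ω^{1/α} t), where E_{α,β}(z) = Σ_{n≥0} z^n / Γ(β + nα) is the two-parameter Mittag-Leffler function. -/
open Real

/-- Two-parameter Mittag-Leffler function `E_{α,β}(x) = Σ_{n≥0} xⁿ/Γ(β+nα)`. -/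
noncomputable def mittagLeffler (α β x : ℝ) : ℝ :=
  ∑' n : ℕ, x ^ n / Real.Gamma (β + n * α)

/-!
Put `s = ω^{1/α} t`, so that `ω t^α = s^α` and `s^{1-β} = ω^{(1-β)/α} t^{1-β}`; it suffices to
bound `E_{α,β}(s^α)` by `C (1 + s^{1-β}) e^s`. With `μ = nα + β - 1` the `n`-th term is
`s^{1-β} s^μ / Γ(μ+1)`. Log-convexity of `Γ`, applied at `μ, ⌊μ⌋ + 1, μ + 1` and at
`μ + 1, ⌊μ⌋ + 2, μ + 2`, bounds `s^μ / Γ(μ+1)` by `2 (s^k/k! + s^{k+1}/(k+1)!)` with `k = ⌊μ⌋`;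
since at most `⌈1/α⌉` indices `n` share the same `k`, these terms add up to at most
`4 ⌈1/α⌉ s^{1-β} e^s`. The finitely many terms with `μ < 0` have `Γ(β + nα) ≥ 1` and are each at
most `1 + s^{1-β}`.
-/

open Finset
open scoped Nat

noncomputable def expTermPair (s : ℝ) (k : ℕ) : ℝ := s ^ k / k ! + s ^ (k + 1) / (k + 1) !

theorem expTermPair_nonneg {s : ℝ} (hs : 0 ≤ s) (k : ℕ) : 0 ≤ expTermPair s k := by
  unfold expTermPair
  positivity

theorem hasSum_expTermPair (s : ℝ) : HasSum (expTermPair s) (2 * exp s - 1) := by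
  have h : HasSum (fun k : ℕ ↦ s ^ k / k !) (exp s) := by
    rw [exp_eq_exp_ℝ]
    exact NormedSpace.expSeries_div_hasSum_exp s
  convert h.add ((hasSum_nat_add_iff' 1).2 h) using 1
  · rfl
  · simp only [range_one, sum_singleton, pow_zero, Nat.factorial_zero, Nat.cast_one, div_one]
    ring

namespace Real

theorem Gamma_add_le_Gamma_mul_rpow {x t : ℝ} (hx : 0 < x) (ht₀ : 0 ≤ t) (ht₁ : t ≤ 1) :
    Gamma (x + t) ≤ Gamma x * x ^ t := by
  have hΓ := Gamma_pos_of_pos hx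
  have hconv := convexOn_log_Gamma.2 (Set.mem_Ioi.2 hx) (Set.mem_Ioi.2 (by linarith : 0 < x + 1))
    (sub_nonneg.2 ht₁) ht₀ (by ring)
  have hlog_succ : log (Gamma (x + 1)) = log (Gamma x) + log x := by
    rw [Gamma_add_one hx.ne', log_mul hx.ne' hΓ.ne', add_comm]
  rw [← log_le_log_iff (Gamma_pos_of_pos (by linarith)) (by positivity),
    log_mul hΓ.ne' (by positivity), log_rpow hx]
  simp only [smul_eq_mul, Function.comp_apply, hlog_succ] at hconv
  calc log (Gamma (x + t)) = log (Gamma ((1 - t) * x + t * (x + 1))) := by ring_nf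
    _ ≤ (1 - t) * log (Gamma x) + t * (log (Gamma x) + log x) := hconv
    _ = log (Gamma x) + t * log x := by ring

theorem factorial_floor_mul_rpow_le_Gamma {μ : ℝ} (hμ : 0 < μ) :
    (⌊μ⌋₊ ! : ℝ) * μ ^ (μ - ⌊μ⌋₊) ≤ Gamma (μ + 1) := by
  have hk : (⌊μ⌋₊ : ℝ) ≤ μ := Nat.floor_le hμ.le
  have hk' : μ < ⌊μ⌋₊ + 1 := Nat.lt_floor_add_one μ
  have h := Gamma_add_le_Gamma_mul_rpow hμ (t := 1 - (μ - ⌊μ⌋₊)) (by linarith) (by linarith)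
  rw [show μ + (1 - (μ - ⌊μ⌋₊)) = (⌊μ⌋₊ : ℝ) + 1 by ring, Gamma_nat_eq_factorial] at h
  calc (⌊μ⌋₊ ! : ℝ) * μ ^ (μ - ⌊μ⌋₊)
      ≤ Gamma μ * μ ^ (1 - (μ - ⌊μ⌋₊)) * μ ^ (μ - ⌊μ⌋₊) := by gcongr
    _ = Gamma (μ + 1) := by
      rw [mul_assoc, ← rpow_add hμ, sub_add_cancel, rpow_one, mul_comm, Gamma_add_one hμ.ne']

theorem factorial_floor_succ_le_Gamma_mul_rpow {μ : ℝ} (hμ : 0 ≤ μ) :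
    ((⌊μ⌋₊ + 1) ! : ℝ) ≤ Gamma (μ + 1) * (μ + 1) ^ (1 - (μ - ⌊μ⌋₊)) := by
  have hk : (⌊μ⌋₊ : ℝ) ≤ μ := Nat.floor_le hμ
  have hk' : μ < ⌊μ⌋₊ + 1 := Nat.lt_floor_add_one μ
  have h := Gamma_add_le_Gamma_mul_rpow (x := μ + 1) (t := 1 - (μ - ⌊μ⌋₊)) (by linarith)
    (by linarith) (by linarith)
  rwa [show μ + 1 + (1 - (μ - ⌊μ⌋₊)) = ((⌊μ⌋₊ + 1 : ℕ) : ℝ) + 1 by push_cast; ring,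
    Gamma_nat_eq_factorial] at h

theorem rpow_div_Gamma_add_one_le_of_le {s μ : ℝ} (hs : 0 < s) (hsμ : s ≤ μ) :
    s ^ μ / Gamma (μ + 1) ≤ s ^ ⌊μ⌋₊ / ⌊μ⌋₊ ! := by
  have hμ := hs.trans_le hsμ
  have hθ : 0 ≤ μ - ⌊μ⌋₊ := sub_nonneg.2 (Nat.floor_le hμ.le)
  have hsplit : s ^ μ = s ^ ⌊μ⌋₊ * s ^ (μ - ⌊μ⌋₊) := by
    rw [← rpow_natCast, ← rpow_add hs, add_sub_cancel]
  calc s ^ μ / Gamma (μ + 1)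
      ≤ s ^ ⌊μ⌋₊ * μ ^ (μ - ⌊μ⌋₊) / (⌊μ⌋₊ ! * μ ^ (μ - ⌊μ⌋₊)) := by
        rw [hsplit]
        gcongr
        exact factorial_floor_mul_rpow_le_Gamma hμ
    _ = s ^ ⌊μ⌋₊ / ⌊μ⌋₊ ! := mul_div_mul_right _ _ (by positivity)

theorem rpow_div_Gamma_add_one_le_of_lt {s μ : ℝ} (hμ : 0 ≤ μ) (hμs : μ < s) :
    s ^ μ / Gamma (μ + 1) ≤ 2 * expTermPair s ⌊μ⌋₊ := by
  have hs : 0 < s := hμ.trans_lt hμs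
  have hk : (⌊μ⌋₊ : ℝ) ≤ μ := Nat.floor_le hμ
  have hk' : μ < ⌊μ⌋₊ + 1 := Nat.lt_floor_add_one μ
  have hΓ : s ^ μ / Gamma (μ + 1) ≤ s ^ μ * (μ + 1) ^ (1 - (μ - ⌊μ⌋₊)) / (⌊μ⌋₊ + 1) ! := by
    rw [div_le_div_iff₀ (Gamma_pos_of_pos (by linarith)) (by positivity), mul_assoc]
    gcongr
    exact (factorial_floor_succ_le_Gamma_mul_rpow hμ).trans_eq (mul_comm _ _)
  rcases le_or_gt 1 s with hs₁ | hs₁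
  · have hbase : (μ + 1) ^ (1 - (μ - ⌊μ⌋₊)) ≤ 2 * s ^ (1 - (μ - ⌊μ⌋₊)) :=
      calc (μ + 1) ^ (1 - (μ - ⌊μ⌋₊)) ≤ (2 * s) ^ (1 - (μ - ⌊μ⌋₊)) := by
            gcongr <;> linarith
        _ = 2 ^ (1 - (μ - ⌊μ⌋₊)) * s ^ (1 - (μ - ⌊μ⌋₊)) := mul_rpow zero_le_two hs.le
        _ ≤ 2 * s ^ (1 - (μ - ⌊μ⌋₊)) := by
            gcongr
            exact rpow_le_self_of_one_le one_le_two (by linarith)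
    have hpow : s ^ μ * s ^ (1 - (μ - ⌊μ⌋₊)) = s ^ (⌊μ⌋₊ + 1) := by
      rw [← rpow_add hs, ← rpow_natCast]
      push_cast
      ring_nf
    calc s ^ μ / Gamma (μ + 1) ≤ s ^ μ * (2 * s ^ (1 - (μ - ⌊μ⌋₊))) / (⌊μ⌋₊ + 1) ! := by
          refine hΓ.trans ?_
          gcongr
      _ = 2 * (s ^ (⌊μ⌋₊ + 1) / (⌊μ⌋₊ + 1) !) := by rw [← hpow]; ring
      _ ≤ _ := by gcongr; exact le_add_of_nonneg_left (by positivity)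
  · have hk0 : ⌊μ⌋₊ = 0 := Nat.floor_eq_zero.2 (hμs.trans hs₁)
    have hbase : (μ + 1) ^ (1 - (μ - ⌊μ⌋₊)) ≤ 2 :=
      (rpow_le_self_of_one_le (by linarith) (by linarith)).trans (by linarith)
    calc s ^ μ / Gamma (μ + 1) ≤ 1 * 2 / (⌊μ⌋₊ + 1) ! := by
          refine hΓ.trans ?_
          gcongr
          exact rpow_le_one hs.le hs₁.le hμ
      _ ≤ _ := by rw [hk0, expTermPair]; norm_num; positivity

theorem rpow_div_Gamma_add_one_le {s μ : ℝ} (hs : 0 < s) (hμ : 0 ≤ μ) :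
    s ^ μ / Gamma (μ + 1) ≤ 2 * expTermPair s ⌊μ⌋₊ := by
  rcases le_or_gt s μ with hsμ | hμs
  · calc s ^ μ / Gamma (μ + 1) ≤ s ^ ⌊μ⌋₊ / ⌊μ⌋₊ ! := rpow_div_Gamma_add_one_le_of_le hs hsμ
      _ ≤ _ := by
        unfold expTermPair
        have : 0 ≤ s ^ (⌊μ⌋₊ + 1) / ((⌊μ⌋₊ + 1) ! : ℝ) := by positivity
        have : 0 ≤ s ^ ⌊μ⌋₊ / (⌊μ⌋₊ ! : ℝ) := by positivity
        linarith
  · exact rpow_div_Gamma_add_one_le_of_lt hμ hμs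

theorem one_le_Gamma_of_le_one {x : ℝ} (hx : 0 < x) (hx₁ : x ≤ 1) : 1 ≤ Gamma x :=
  Gamma_one ▸ Gamma_strictAntiOn_Ioc.antitoneOn ⟨hx, hx₁⟩ ⟨one_pos, le_rfl⟩ hx₁

theorem rpow_le_one_add_rpow {s x y : ℝ} (hs : 0 ≤ s) (hx : 0 ≤ x) (hxy : x ≤ y) :
    s ^ x ≤ 1 + s ^ y := by
  rcases le_or_gt s 1 with hs₁ | hs₁
  · linarith [rpow_le_one hs hs₁ hx, rpow_nonneg hs y]
  · linarith [rpow_le_rpow_of_exponent_le hs₁.le hxy]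

end Real

theorem card_filter_floor_mul_add_eq_le {α c : ℝ} (hα : 0 < α) {T : Finset ℕ}
    (hT : ∀ n ∈ T, 0 ≤ n * α + c) (j : ℕ) :
    #{n ∈ T | ⌊((n : ℕ) : ℝ) * α + c⌋₊ = j} ≤ ⌈1 / α⌉₊ :=
  calc #{n ∈ T | ⌊((n : ℕ) : ℝ) * α + c⌋₊ = j}
      ≤ #(Ico ⌈(j - c) / α⌉₊ ⌈(j - c) / α + 1 / α⌉₊) := by
        refine card_le_card fun n hn ↦ ?_
        obtain ⟨hnT, rfl⟩ := mem_filter.1 hn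
        rw [mem_Ico, Nat.ceil_le, Nat.lt_ceil, div_le_iff₀ hα, ← add_div, lt_div_iff₀ hα]
        constructor <;> linarith [Nat.floor_le (hT n hnT), Nat.lt_floor_add_one ((n : ℝ) * α + c)]
    _ ≤ ⌈1 / α⌉₊ := by
        rw [Nat.card_Ico]
        have := Nat.ceil_add_le ((j - c) / α) (1 / α)
        omega

theorem sum_comp_floor_mul_add_le {α c : ℝ} (hα : 0 < α) {f : ℕ → ℝ} (hf : ∀ k, 0 ≤ f k)
    (hfs : Summable f) {T : Finset ℕ} (hT : ∀ n ∈ T, 0 ≤ n * α + c) :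
    ∑ n ∈ T, f ⌊n * α + c⌋₊ ≤ ⌈1 / α⌉₊ * ∑' k, f k := by
  classical
  rw [sum_comp]
  calc ∑ j ∈ T.image (fun n : ℕ ↦ ⌊n * α + c⌋₊), #{n ∈ T | ⌊((n : ℕ) : ℝ) * α + c⌋₊ = j} • f j
      ≤ ∑ j ∈ T.image (fun n : ℕ ↦ ⌊n * α + c⌋₊), ⌈1 / α⌉₊ • f j :=
        sum_le_sum fun j _ ↦ nsmul_le_nsmul_left (hf j) (card_filter_floor_mul_add_eq_le hα hT j)
    _ ≤ ⌈1 / α⌉₊ * ∑' k, f k := by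
        rw [← smul_sum, nsmul_eq_mul]
        gcongr
        exact hfs.sum_le_tsum _ fun k _ ↦ hf k

theorem rpow_div_Gamma_le_one_add_rpow {s x β : ℝ} (hs : 0 ≤ s) (hx : 0 ≤ x) (hβ : 0 < β)
    (hxβ : x + β ≤ 1) : s ^ x / Gamma (β + x) ≤ 1 + s ^ (1 - β) := by
  have hΓ : 1 ≤ Gamma (β + x) := one_le_Gamma_of_le_one (by positivity) (by linarith)
  calc s ^ x / Gamma (β + x) ≤ s ^ x := div_le_self (rpow_nonneg hs x) hΓ
    _ ≤ 1 + s ^ (1 - β) := rpow_le_one_add_rpow hs hx (by linarith)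

theorem rpow_div_Gamma_le_rpow_mul_expTermPair {s x β : ℝ} (hs : 0 < s)
    (hμ : 0 ≤ x + (β - 1)) :
    s ^ x / Gamma (β + x) ≤ 2 * s ^ (1 - β) * expTermPair s ⌊x + (β - 1)⌋₊ := by
  calc s ^ x / Gamma (β + x) = s ^ (1 - β) * (s ^ (x + (β - 1)) / Gamma (x + (β - 1) + 1)) := by
        rw [mul_div_assoc', ← rpow_add hs]
        ring_nf
    _ ≤ s ^ (1 - β) * (2 * expTermPair s ⌊x + (β - 1)⌋₊) := by
        gcongr
        exact rpow_div_Gamma_add_one_le hs hμ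
    _ = 2 * s ^ (1 - β) * expTermPair s ⌊x + (β - 1)⌋₊ := by ring

theorem tsum_rpow_mul_div_Gamma_le {α β s : ℝ} (hα : 0 < α) (hβ : 0 < β) (hs : 0 < s) :
    ∑' n : ℕ, s ^ (n * α) / Gamma (β + n * α) ≤
      (⌈(1 - β) / α⌉₊ + 4 * ⌈1 / α⌉₊) * (1 + s ^ (1 - β)) * exp s := by
  have hΓ : ∀ n : ℕ, 0 < Gamma (β + n * α) := fun n ↦ Gamma_pos_of_pos (by positivity)
  refine tsum_le_of_sum_range_le (fun n ↦ div_nonneg (rpow_nonneg hs.le _) (hΓ n).le) fun N ↦ ?_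
  rw [← sum_filter_add_sum_filter_not (range N) (fun n : ℕ ↦ n * α + (β - 1) < 0)]
  have hsmall : ∑ n ∈ range N with ((n : ℕ) : ℝ) * α + (β - 1) < 0,
      s ^ (n * α) / Gamma (β + n * α) ≤ ⌈(1 - β) / α⌉₊ * (1 + s ^ (1 - β)) := by
    refine (sum_le_sum fun n hn ↦ rpow_div_Gamma_le_one_add_rpow hs.le (by positivity) hβ
      (by linarith [(mem_filter.1 hn).2])).trans ?_
    rw [sum_const, nsmul_eq_mul]
    gcongr
    refine (card_le_card fun n hn ↦ ?_).trans (card_range _).le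
    rw [mem_range, Nat.lt_ceil, lt_div_iff₀ hα]
    linarith [(mem_filter.1 hn).2]
  have hlarge : ∑ n ∈ range N with ¬ ((n : ℕ) : ℝ) * α + (β - 1) < 0,
      s ^ (n * α) / Gamma (β + n * α) ≤ 2 * s ^ (1 - β) * (⌈1 / α⌉₊ * (2 * exp s - 1)) := by
    have hE := hasSum_expTermPair s
    refine (sum_le_sum fun n hn ↦ rpow_div_Gamma_le_rpow_mul_expTermPair hs
      (not_lt.1 (mem_filter.1 hn).2)).trans ?_
    rw [← mul_sum, ← hE.tsum_eq]
    gcongr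
    exact sum_comp_floor_mul_add_le hα (fun k ↦ expTermPair_nonneg hs.le k) hE.summable
      fun n hn ↦ not_lt.1 (mem_filter.1 hn).2
  have hr : 0 ≤ s ^ (1 - β) := rpow_nonneg hs.le _
  have hexp : 1 ≤ exp s := one_le_exp hs.le
  calc _ ≤ ⌈(1 - β) / α⌉₊ * (1 + s ^ (1 - β)) +
        2 * s ^ (1 - β) * (⌈1 / α⌉₊ * (2 * exp s - 1)) := add_le_add hsmall hlarge
    _ ≤ _ := by
        have hn₀ : (0 : ℝ) ≤ ⌈(1 - β) / α⌉₊ * (1 + s ^ (1 - β)) := by positivity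
        have hM : (0 : ℝ) ≤ ⌈1 / α⌉₊ := by positivity
        nlinarith [mul_nonneg hn₀ (sub_nonneg.2 hexp), mul_nonneg hM hr,
          mul_nonneg hM (exp_pos s).le]

theorem mittagLeffler_zero (α β : ℝ) : mittagLeffler α β 0 = (Gamma β)⁻¹ := by
  rw [mittagLeffler, tsum_eq_single 0 fun n hn ↦ by simp [zero_pow hn]]
  simp

theorem mittagLeffler_rpow_le {α β : ℝ} (hα : 0 < α) (hβ : 0 < β) :
    ∃ C > 0, ∀ s ≥ 0, mittagLeffler α β (s ^ α) ≤ C * (1 + s ^ (1 - β)) * exp s := by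
  refine ⟨max (⌈(1 - β) / α⌉₊ + 4 * ⌈1 / α⌉₊) (Gamma β)⁻¹,
    lt_max_of_lt_right (inv_pos.2 (Gamma_pos_of_pos hβ)), fun s hs ↦ ?_⟩
  rcases hs.eq_or_lt with rfl | hs
  · rw [zero_rpow hα.ne', mittagLeffler_zero, exp_zero, mul_one]
    exact (le_max_right _ _).trans (le_mul_of_one_le_right (by positivity)
      (le_add_of_nonneg_right (rpow_nonneg le_rfl _)))
  · have hterm : ∀ n : ℕ, (s ^ α) ^ n = s ^ (n * α) := fun n ↦ by
      rw [← rpow_natCast, ← rpow_mul hs.le, mul_comm]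
    rw [mittagLeffler]
    simp only [hterm]
    refine (tsum_rpow_mul_div_Gamma_le hα hβ hs).trans ?_
    gcongr
    exact le_max_left _ _

theorem mittagLeffler_bound_general (α β : ℝ) (hα₁ : 0 < α) (hβ : 0 < β) :
    ∃ C > (0 : ℝ), ∀ ω ≥ (0 : ℝ), ∀ t ≥ (0 : ℝ),
      mittagLeffler α β (ω * t ^ α) ≤
        C * (1 + ω ^ ((1 - β) / α)) * (1 + t ^ (1 - β)) * Real.exp (ω ^ (1 / α) * t) := by
  obtain ⟨C, hC, hbound⟩ := mittagLeffler_rpow_le hα₁ hβ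
  refine ⟨C, hC, fun ω hω t ht ↦ ?_⟩
  have hω' : 0 ≤ ω ^ (1 / α) := rpow_nonneg hω _
  have harg : ω * t ^ α = (ω ^ (1 / α) * t) ^ α := by
    rw [mul_rpow hω' ht, ← rpow_mul hω, one_div_mul_cancel hα₁.ne', rpow_one]
  have hpow : (ω ^ (1 / α) * t) ^ (1 - β) = ω ^ ((1 - β) / α) * t ^ (1 - β) := by
    rw [mul_rpow hω' ht, ← rpow_mul hω, one_div_mul_eq_div]
  rw [harg, mul_assoc C]
  refine (hbound _ (mul_nonneg hω' ht)).trans ?_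
  rw [hpow]
  gcongr
  nlinarith [rpow_nonneg hω ((1 - β) / α), rpow_nonneg ht (1 - β)]

/-- For `0 < α < 2`, `β > 0` there is `C_{α,β} > 0` with
`E_{α,β}(ω t^α) ≤ C_{α,β}(1+ω^{(1-β)/α})(1+t^{1-β}) exp(ω^{1/α} t)` for all `ω, t ≥ 0`. -/
theorem mittagLeffler_bound (α β : ℝ) (hα₁ : 0 < α) (hα₂ : α < 2) (hβ : 0 < β) :
    ∃ C > (0 : ℝ), ∀ ω ≥ (0 : ℝ), ∀ t ≥ (0 : ℝ),
      mittagLeffler α β (ω * t ^ α) ≤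
        C * (1 + ω ^ ((1 - β) / α)) * (1 + t ^ (1 - β)) * Real.exp (ω ^ (1 / α) * t) :=
  mittagLeffler_bound_general α β hα₁ hβ
end

section
/- Let A be a bounded linear operator on a Banach space E, α > 0, and S_α(t) = E_α(t^α A) = Σ_{n=0}^∞ t^{nα} Aⁿ / Γ(1 + nα). Then S_α(t) x solves the Volterra integral equation u(t) = x + ∫_0^t g_α(t-τ) A u(τ) dτ for every x ∈ E and t ≥ 0, where g_α(t) = t^{α-1}/Γ(α) for t > 0. -/
open Real MeasureTheory intervalIntegral

/-- Operator-valued two-parameter Mittag-Leffler function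
`E_{α,β}(t^α A) = Σ_{n≥0} t^{nα} Aⁿ / Γ(β+nα)`. -/
noncomputable def opML {E : Type*} [NormedAddCommGroup E] [NormedSpace ℝ E]
    (α β : ℝ) (A : E →L[ℝ] E) (t : ℝ) : E →L[ℝ] E :=
  ∑' n : ℕ, (t ^ ((n : ℝ) * α) / Real.Gamma (β + n * α)) • A ^ n

/-- The kernel `g_α(t) = t^{α-1}/Γ(α)` for `t > 0`, `0` otherwise. -/
noncomputable def gKer (α t : ℝ) : ℝ :=
  if 0 < t then t ^ (α - 1) / Real.Gamma α else 0

/-!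
Expand `S_α(τ)x = Σ τ^{nα}/Γ(1+nα) Aⁿx` and integrate term by term. By the Beta integral,
`∫₀ᵗ g_α(t-τ) τ^{nα}/Γ(1+nα) dτ = t^{(n+1)α}/Γ(1+(n+1)α)`, so the Volterra integral of
`A S_α(·)x` is the series of `S_α(t)x` without its term `n = 0`, which is `x`.
The interchange of sum and integral is justified because the integrals of the norms are
dominated by `Σ (t^α‖A‖)ⁿ/Γ(1+nα) ‖x‖`, and `Σ rⁿ/Γ(1+nα)` converges for every `r`
since `Γ(1+s) ≥ M^s e^{-M}` for every `M ≥ 0`.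
-/

theorem integral_rpow_mul_sub_rpow {p q a : ℝ} (hp : 0 < p) (hq : 0 < q) (ha : 0 < a) :
    ∫ x in (0:ℝ)..a, x ^ (p - 1) * (a - x) ^ (q - 1)
      = Gamma p * Gamma q / Gamma (p + q) * a ^ (p + q - 1) := by
  have hpq : Complex.Gamma (p + q) = Gamma (p + q) := by
    rw [← Complex.ofReal_add, Complex.Gamma_ofReal]
  suffices h : ((∫ x in (0:ℝ)..a, x ^ (p - 1) * (a - x) ^ (q - 1) : ℝ) : ℂ)
      = ((Gamma p * Gamma q / Gamma (p + q) * a ^ (p + q - 1) : ℝ) : ℂ) from mod_cast h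
  rw [← intervalIntegral.integral_ofReal]
  calc ∫ x in (0:ℝ)..a, ((x ^ (p - 1) * (a - x) ^ (q - 1) : ℝ) : ℂ)
      = ∫ x in (0:ℝ)..a, (x : ℂ) ^ ((p : ℂ) - 1) * ((a : ℂ) - x) ^ ((q : ℂ) - 1) := by
        refine intervalIntegral.integral_congr fun x hx => ?_
        rw [Set.uIcc_of_le ha.le] at hx
        push_cast [Complex.ofReal_cpow hx.1, Complex.ofReal_cpow (sub_nonneg.2 hx.2)]
        rfl
    _ = (a : ℂ) ^ ((p : ℂ) + q - 1) * Complex.betaIntegral p q :=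
        Complex.betaIntegral_scaled _ _ ha
    _ = _ := by
        rw [Complex.betaIntegral_eq_Gamma_mul_div _ _ (by simpa) (by simpa), hpq,
          Complex.Gamma_ofReal, Complex.Gamma_ofReal]
        push_cast [Complex.ofReal_cpow ha.le]
        ring

theorem rpow_mul_exp_neg_le_Gamma {s M : ℝ} (hs : 1 ≤ s) (hM : 0 ≤ M) :
    M ^ (s - 1) * exp (-M) ≤ Gamma s := by
  have hint := GammaIntegral_convergent (s := s) (by linarith)
  rw [Gamma_eq_integral (by linarith), ← integral_exp_neg_Ioi M,
    ← MeasureTheory.integral_const_mul]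
  calc ∫ x in Set.Ioi M, M ^ (s - 1) * exp (-x)
      ≤ ∫ x in Set.Ioi M, exp (-x) * x ^ (s - 1) := by
        refine setIntegral_mono_on ((integrableOn_exp_neg_Ioi M).const_mul _)
          (hint.mono_set (Set.Ioi_subset_Ioi hM)) measurableSet_Ioi fun x hx => ?_
        rw [mul_comm]
        gcongr
        exact le_of_lt hx
    _ ≤ ∫ x in Set.Ioi 0, exp (-x) * x ^ (s - 1) :=
        setIntegral_mono_set hint
          ((ae_restrict_mem measurableSet_Ioi).mono fun x (hx : 0 < x) => by positivity)
          (Filter.Eventually.of_forall (Set.Ioi_subset_Ioi hM))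

theorem summable_pow_div_Gamma {α : ℝ} (hα : 0 < α) (r : ℝ) :
    Summable fun n : ℕ => r ^ n / Gamma (1 + n * α) := by
  set q := 2 * |r| + 1
  have hq : 0 < q := by positivity
  have hρ : |r| / q < 1 := (div_lt_one hq).2 (by linarith [abs_nonneg r])
  set M := q ^ α⁻¹
  have hMpow (n : ℕ) : M ^ (1 + n * α - 1) = q ^ n := by
    rw [add_sub_cancel_left, ← rpow_mul hq.le, mul_comm (n : ℝ), inv_mul_cancel_left₀ hα.ne',
      rpow_natCast]
  refine Summable.of_norm_bounded
    ((summable_geometric_of_lt_one (by positivity) hρ).mul_left (exp M)) fun n => ?_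
  have hΓ := rpow_mul_exp_neg_le_Gamma (s := 1 + n * α) (M := M)
    (le_add_of_nonneg_right (by positivity)) (by positivity)
  rw [hMpow] at hΓ
  have hΓpos : 0 < Gamma (1 + n * α) := Gamma_pos_of_pos (by positivity)
  rw [norm_div, norm_pow, Real.norm_eq_abs, Real.norm_of_nonneg hΓpos.le, div_le_iff₀ hΓpos]
  calc |r| ^ n = exp M * (|r| / q) ^ n * (q ^ n * exp (-M)) := by
        rw [div_pow, exp_neg]; field_simp
    _ ≤ exp M * (|r| / q) ^ n * Gamma (1 + n * α) := by gcongr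

theorem summable_rpow_div_Gamma_mul_pow {α t : ℝ} (hα : 0 < α) (ht : 0 ≤ t) (R : ℝ) :
    Summable fun n : ℕ => t ^ ((n : ℝ) * α) / Gamma (1 + n * α) * R ^ n := by
  refine (summable_pow_div_Gamma hα (t ^ α * R)).congr fun n => ?_
  rw [mul_pow, ← rpow_natCast, ← rpow_mul ht, mul_comm α]
  ring

namespace ContinuousLinearMap

variable {𝕜 E : Type*} [NontriviallyNormedField 𝕜] [SeminormedAddCommGroup E] [NormedSpace 𝕜 E]

theorem norm_pow_apply_le (A : E →L[𝕜] E) (n : ℕ) (x : E) : ‖(A ^ n) x‖ ≤ ‖A‖ ^ n * ‖x‖ := by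
  induction n with
  | zero => simp
  | succ n ih =>
    calc ‖(A ^ (n + 1)) x‖ = ‖A ((A ^ n) x)‖ := by rw [pow_succ', mul_apply_eq_comp]
      _ ≤ ‖A‖ * (‖A‖ ^ n * ‖x‖) := A.le_opNorm_of_le ih
      _ = ‖A‖ ^ (n + 1) * ‖x‖ := by ring

theorem norm_pow_le_pow_norm (A : E →L[𝕜] E) (n : ℕ) : ‖A ^ n‖ ≤ ‖A‖ ^ n :=
  opNorm_le_bound _ (by positivity) (norm_pow_apply_le A n)

end ContinuousLinearMap

theorem summable_rpow_div_Gamma_mul_norm_pow_apply {E : Type*} [SeminormedAddCommGroup E]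
    [NormedSpace ℝ E] {α t : ℝ} (hα : 0 < α) (ht : 0 ≤ t) (A : E →L[ℝ] E) (x : E) :
    Summable fun n : ℕ => t ^ ((n : ℝ) * α) / Gamma (1 + n * α) * ‖(A ^ n) x‖ := by
  refine ((summable_rpow_div_Gamma_mul_pow hα ht ‖A‖).mul_right ‖x‖).of_nonneg_of_le
    (fun n => by positivity) fun n => ?_
  rw [mul_assoc]
  gcongr
  exact A.norm_pow_apply_le n x

theorem hasSum_opML_apply {E : Type*} [NormedAddCommGroup E] [NormedSpace ℝ E] [CompleteSpace E]
    {α t : ℝ} (hα : 0 < α) (ht : 0 ≤ t) (A : E →L[ℝ] E) (x : E) :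
    HasSum (fun n : ℕ => (t ^ ((n : ℝ) * α) / Gamma (1 + n * α)) • (A ^ n) x)
      (opML α 1 A t x) := by
  have hsum : Summable fun n : ℕ => (t ^ ((n : ℝ) * α) / Gamma (1 + n * α)) • A ^ n := by
    refine Summable.of_norm_bounded (summable_rpow_div_Gamma_mul_pow hα ht ‖A‖) fun n => ?_
    rw [norm_smul, Real.norm_of_nonneg (by positivity)]
    gcongr
    exact A.norm_pow_le_pow_norm n
  exact hsum.hasSum.mapL (ContinuousLinearMap.apply ℝ E x)

theorem gKer_nonneg {α : ℝ} (hα : 0 < α) (t : ℝ) : 0 ≤ gKer α t := by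
  unfold gKer
  split_ifs with ht
  · positivity
  · exact le_rfl

theorem integrableOn_gKer_Iic {α : ℝ} (hα : 0 < α) (c : ℝ) :
    IntegrableOn (gKer α) (Set.Iic c) := by
  have hneg : IntegrableOn (gKer α) (Set.Iic 0) :=
    integrableOn_zero.congr_fun (fun s (hs : s ≤ 0) => by simp [gKer, hs.not_gt])
      measurableSet_Iic
  have hpos : IntegrableOn (gKer α) (Set.Ioc 0 c) := by
    refine IntegrableOn.congr_fun ?_ (fun s (hs : s ∈ Set.Ioc 0 c) => (if_pos hs.1).symm)
      measurableSet_Ioc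
    exact ((intervalIntegrable_rpow' (by linarith)).div_const _).def'.mono_set
      Set.Ioc_subset_uIoc
  refine (hneg.union hpos).mono_set fun s hs => ?_
  by_cases h : s ≤ 0
  · exact Or.inl h
  · exact Or.inr ⟨not_le.1 h, hs⟩

theorem intervalIntegrable_gKer {α : ℝ} (hα : 0 < α) (a b : ℝ) :
    IntervalIntegrable (gKer α) volume a b :=
  intervalIntegrable_iff.2 <|
    (integrableOn_gKer_Iic hα (max a b)).mono_set fun _ hs => hs.2

theorem integral_gKer_sub_mul_rpow {α β t : ℝ} (hα : 0 < α) (hβ : -1 < β) (ht : 0 < t) :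
    ∫ τ in (0:ℝ)..t, gKer α (t - τ) * (τ ^ β / Gamma (1 + β))
      = t ^ (β + α) / Gamma (1 + (β + α)) := by
  have hΓα := (Gamma_pos_of_pos hα).ne'
  have hΓβ := (Gamma_pos_of_pos (by linarith : 0 < 1 + β)).ne'
  calc ∫ τ in (0:ℝ)..t, gKer α (t - τ) * (τ ^ β / Gamma (1 + β))
      = ∫ τ in (0:ℝ)..t,
          τ ^ ((1 + β) - 1) * (t - τ) ^ (α - 1) / (Gamma α * Gamma (1 + β)) := by
        refine integral_congr_ae ((Measure.ae_ne volume t).mono fun τ hτt hτ => ?_)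
        rw [Set.uIoc_of_le ht.le] at hτ
        rw [gKer, if_pos (sub_pos.2 (lt_of_le_of_ne hτ.2 hτt)), add_sub_cancel_left]
        field_simp
    _ = t ^ (β + α) / Gamma (1 + (β + α)) := by
        rw [intervalIntegral.integral_div, integral_rpow_mul_sub_rpow (by linarith) hα ht,
          show 1 + β + α - 1 = β + α by ring, add_assoc]
        field_simp

theorem hasSum_integral_gKer_smul_tsum {E : Type*} [NormedAddCommGroup E] [NormedSpace ℝ E]
    [CompleteSpace E] {α t : ℝ} (hα : 0 < α) (ht : 0 ≤ t) {v : ℕ → E}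
    (hv : Summable fun n : ℕ =>
      t ^ (((n + 1 : ℕ) : ℝ) * α) / Gamma (1 + ((n + 1 : ℕ) : ℝ) * α) * ‖v n‖) :
    HasSum (fun n : ℕ => (t ^ (((n + 1 : ℕ) : ℝ) * α) / Gamma (1 + ((n + 1 : ℕ) : ℝ) * α)) • v n)
      (∫ τ in (0:ℝ)..t,
        gKer α (t - τ) • ∑' n : ℕ, (τ ^ ((n : ℝ) * α) / Gamma (1 + n * α)) • v n) := by
  rcases ht.eq_or_lt with rfl | ht
  · have h0 (n : ℕ) : (0 : ℝ) ^ (((n + 1 : ℕ) : ℝ) * α) = 0 := zero_rpow (by positivity)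
    simp only [h0, zero_div, zero_smul, integral_same]
    exact hasSum_zero
  set k : ℕ → ℝ → ℝ := fun n τ => gKer α (t - τ) * (τ ^ ((n : ℝ) * α) / Gamma (1 + n * α))
  have hk_int (n : ℕ) : IntervalIntegrable (k n) volume 0 t := by
    have hg := (intervalIntegrable_gKer hα t 0).comp_sub_left t
    rw [sub_self, sub_zero] at hg
    exact hg.mul_continuousOn ((continuous_rpow_const (by positivity)).div_const _).continuousOn
  have hk_val (n : ℕ) : ∫ τ in (0:ℝ)..t, k n τ
      = t ^ (((n + 1 : ℕ) : ℝ) * α) / Gamma (1 + ((n + 1 : ℕ) : ℝ) * α) := by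
    rw [show ((n + 1 : ℕ) : ℝ) * α = n * α + α by push_cast; ring]
    exact integral_gKer_sub_mul_rpow hα (by linarith [show 0 ≤ (n : ℝ) * α by positivity]) ht
  have hk_norm (n : ℕ) : ∫ τ in (0:ℝ)..t, ‖k n τ • v n‖
      = t ^ (((n + 1 : ℕ) : ℝ) * α) / Gamma (1 + ((n + 1 : ℕ) : ℝ) * α) * ‖v n‖ := by
    rw [← hk_val, ← intervalIntegral.integral_mul_const]
    refine intervalIntegral.integral_congr fun τ hτ => ?_
    rw [Set.uIcc_of_le ht.le] at hτ
    have hτ0 := hτ.1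
    rw [norm_smul, Real.norm_of_nonneg (mul_nonneg (gKer_nonneg hα _) (by positivity))]
  have hk_smul (n : ℕ) : ∫ τ in (0:ℝ)..t, k n τ • v n
      = (t ^ (((n + 1 : ℕ) : ℝ) * α) / Gamma (1 + ((n + 1 : ℕ) : ℝ) * α)) • v n := by
    rw [intervalIntegral.integral_smul_const, hk_val]
  -- `tsum_const_smul''` needs no summability: the scalars form a field.
  have hintegrand : (fun τ => gKer α (t - τ) •
      ∑' n : ℕ, (τ ^ ((n : ℝ) * α) / Gamma (1 + n * α)) • v n) = fun τ => ∑' n : ℕ, k n τ • v n := by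
    ext τ
    rw [← tsum_const_smul'']
    simp only [smul_smul, k]
  rw [hintegrand]
  simp only [intervalIntegral.integral_of_le ht.le] at hk_smul hk_norm ⊢
  simp only [← hk_smul]
  exact hasSum_integral_of_summable_integral_norm (fun n => (hk_int n).1.smul_const (v n))
    (by simpa only [hk_norm] using hv)

/-- `S_α(t)x = E_α(t^α A)x` solves the Volterra equation
`u(t) = x + ∫_0^t g_α(t-τ) A u(τ) dτ`. -/
theorem opML_solves_volterra
    {E : Type*} [NormedAddCommGroup E] [NormedSpace ℝ E] [CompleteSpace E]
    (α : ℝ) (hα : 0 < α) (A : E →L[ℝ] E) :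
    ∀ (x : E) (t : ℝ), 0 ≤ t →
      opML α 1 A t x = x + ∫ τ in (0:ℝ)..t, gKer α (t - τ) • A (opML α 1 A τ x) := by
  intro x t ht
  have hA (τ : ℝ) (hτ : 0 ≤ τ) : A (opML α 1 A τ x)
      = ∑' n : ℕ, (τ ^ ((n : ℝ) * α) / Gamma (1 + n * α)) • (A ^ (n + 1)) x := by
    refine ((hasSum_opML_apply hα hτ A x).mapL A).tsum_eq.symm.trans (tsum_congr fun n => ?_)
    rw [map_smul, pow_succ', mul_apply_eq_comp]
  have hint := hasSum_integral_gKer_smul_tsum hα ht (v := fun n => (A ^ (n + 1)) x)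
    ((summable_nat_add_iff 1).2 (summable_rpow_div_Gamma_mul_norm_pow_apply hα ht A x))
  rw [intervalIntegral.integral_congr fun τ hτ => by rw [hA τ (Set.uIcc_of_le ht ▸ hτ).1]]
  refine (hasSum_opML_apply hα ht A x).unique ?_
  convert hint.zero_add (f := fun n : ℕ => (t ^ ((n : ℝ) * α) / Gamma (1 + n * α)) • (A ^ n) x)
    using 2
  simp
end
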